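/- Let d ≥ 1, τ > 0, and let k_τ(x,y) = (2πτ²)^{−d/2} exp(−‖x−y‖²/(2τ²)) be the Gaussian kernel on ℝ^d. Let p and q be probability measures on ℝ^d with smoothed densities p̂_τ(x) = ∫ k_τ(x,y) dp(y) and q̂_τ(x) = ∫ k_τ(x,y) dq(y). Then the original drifting field V_{p,q}(x) = V_p^+(x) − V_q^−(x) satisfies V_{p,q}(x) = τ² (∇ log p̂_τ(x) − ∇ log q̂_τ(x)) for every x, and the kernel-gradient drift V^∇_{p,q}(x) = G_p(x) − G_q(x) satisfies V^∇_{p,q}(x) = (1/τ²) · V_{p,q}(x); that is, for the Gaussian kernel the kernel-gradient formulation recovers the original drifting field up to the constant factor τ². -/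

import Mathlib

/-! The Gaussian kernel satisfies `∇ₓ k_τ(x, y) = τ⁻² k_τ(x, y) (y - x)`. Since
`‖k_τ(x, y) (y - x)‖` is bounded uniformly in `x` and `y` (because `t e^{-t²/2τ²} ≤ τ`),
differentiation under the integral gives `∇p̂ = τ⁻² ∫ k_τ(x, y) (y - x) dp(y)`, hence
`∇ log p̂ = ∇p̂ / p̂ = τ⁻² V_p^+`; likewise `G_p = τ⁻² V_p^+`. Subtracting the same identities
for `q` gives both claims. -/

open MeasureTheory

/-- The Gaussian kernel with temperature `τ > 0` on `ℝ^d`: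
`k_τ(x,y) = (2πτ²)^(−d/2) exp(−‖x−y‖²/(2τ²))`. -/
noncomputable def gaussKernel (d : ℕ) (τ : ℝ)
    (x y : EuclideanSpace ℝ (Fin d)) : ℝ :=
  (2 * Real.pi * τ ^ 2) ^ (-(d : ℝ) / 2) * Real.exp (-‖x - y‖ ^ 2 / (2 * τ ^ 2))

open Real

section Gradient

variable {E : Type*} [NormedAddCommGroup E] [InnerProductSpace ℝ E] [CompleteSpace E]

theorem HasDerivAt.comp_hasGradientAt {g : ℝ → ℝ} {g' : ℝ} {f : E → ℝ} {f' x : E}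
    (hg : HasDerivAt g g' (f x)) (hf : HasGradientAt f f' x) :
    HasGradientAt (fun x => g (f x)) (g' • f') x := by
  rw [hasGradientAt_iff_hasFDerivAt, map_smul]
  exact hg.comp_hasFDerivAt x hf.hasFDerivAt

theorem hasGradientAt_integral_of_dominated {α : Type*} [MeasurableSpace α] {μ : Measure α}
    {F : E → α → ℝ} {F' : E → α → E} {bound : α → ℝ} {x₀ : E}
    (hF_meas : ∀ x, AEStronglyMeasurable (F x) μ) (hF_int : Integrable (F x₀) μ)
    (hF'_meas : AEStronglyMeasurable (F' x₀) μ) (h_bound : ∀ᵐ a ∂μ, ∀ x, ‖F' x a‖ ≤ bound a)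
    (bound_integrable : Integrable bound μ)
    (h_diff : ∀ᵐ a ∂μ, ∀ x, HasGradientAt (F · a) (F' x a) x) :
    HasGradientAt (fun x => ∫ a, F x a ∂μ) (∫ a, F' x₀ a ∂μ) x₀ := by
  have key := hasFDerivAt_integral_of_dominated_of_fderiv_le
    (F' := fun x a => InnerProductSpace.toDual ℝ E (F' x a)) Filter.univ_mem
    (.of_forall hF_meas) hF_int
    ((InnerProductSpace.toDual ℝ E).continuous.comp_aestronglyMeasurable hF'_meas)
    (by filter_upwards [h_bound] with a ha x _ using by simpa using ha x)
    bound_integrable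
    (by filter_upwards [h_diff] with a ha x _ using (ha x).hasFDerivAt)
  rw [hasGradientAt_iff_hasFDerivAt]
  exact key.congr_fderiv
    ((InnerProductSpace.toDual ℝ E).toContinuousLinearEquiv.integral_comp_comm _)

theorem hasGradientAt_norm_sub_sq (y x : E) :
    HasGradientAt (fun x => ‖x - y‖ ^ 2) ((2 : ℝ) • (x - y)) x := by
  rw [hasGradientAt_iff_hasFDerivAt]
  refine ((hasFDerivAt_id x).sub_const y).norm_sq.congr_fderiv ?_
  ext v
  simp

end Gradient

theorem mul_exp_neg_sq_div_two_le_one (s : ℝ) : s * exp (-s ^ 2 / 2) ≤ 1 :=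
  calc s * exp (-s ^ 2 / 2) ≤ exp (s - 1) * exp (-s ^ 2 / 2) := by
        gcongr
        linarith [add_one_le_exp (s - 1)]
    _ = exp (-((s - 1) ^ 2 + 1) / 2) := by rw [← exp_add]; ring_nf
    _ ≤ 1 := exp_le_one_iff.2 (by nlinarith [sq_nonneg (s - 1)])

section Gaussian

variable {d : ℕ} {τ : ℝ}

theorem hasGradientAt_gaussKernel (y x : EuclideanSpace ℝ (Fin d)) :
    HasGradientAt (gaussKernel d τ · y) ((τ ^ 2)⁻¹ • gaussKernel d τ x y • (y - x)) x := by
  unfold gaussKernel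
  have hg := (((hasDerivAt_neg (‖x - y‖ ^ 2)).div_const (2 * τ ^ 2)).exp).const_mul
    ((2 * π * τ ^ 2) ^ (-(d : ℝ) / 2))
  convert hg.comp_hasGradientAt (f := (‖· - y‖ ^ 2)) (hasGradientAt_norm_sub_sq y x) using 1
  rw [← neg_sub x y]
  module

theorem gaussKernel_nonneg (x y : EuclideanSpace ℝ (Fin d)) : 0 ≤ gaussKernel d τ x y := by
  unfold gaussKernel; positivity

theorem gaussKernel_pos (hτ : τ ≠ 0) (x y : EuclideanSpace ℝ (Fin d)) :
    0 < gaussKernel d τ x y := by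
  unfold gaussKernel; positivity

theorem continuous_gaussKernel (x : EuclideanSpace ℝ (Fin d)) :
    Continuous (gaussKernel d τ x) := by
  unfold gaussKernel; fun_prop

theorem gaussKernel_le (x y : EuclideanSpace ℝ (Fin d)) :
    gaussKernel d τ x y ≤ (2 * π * τ ^ 2) ^ (-(d : ℝ) / 2) := by
  unfold gaussKernel
  refine mul_le_of_le_one_right (by positivity) (exp_le_one_iff.2 ?_)
  rw [neg_div]
  exact neg_nonpos.2 (by positivity)

theorem norm_gaussKernel_smul_sub_le (hτ : 0 < τ) (x y : EuclideanSpace ℝ (Fin d)) :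
    ‖gaussKernel d τ x y • (y - x)‖ ≤ (2 * π * τ ^ 2) ^ (-(d : ℝ) / 2) * τ := by
  rw [norm_smul, Real.norm_of_nonneg (gaussKernel_nonneg x y), gaussKernel, mul_assoc,
    norm_sub_rev y x]
  gcongr
  calc exp (-‖x - y‖ ^ 2 / (2 * τ ^ 2)) * ‖x - y‖
      = τ * (‖x - y‖ / τ * exp (-(‖x - y‖ / τ) ^ 2 / 2)) := by field_simp
    _ ≤ τ * 1 := by gcongr; exact mul_exp_neg_sq_div_two_le_one _
    _ = τ := mul_one τ

theorem integrable_gaussKernel (μ : Measure (EuclideanSpace ℝ (Fin d))) [IsFiniteMeasure μ]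
    (x : EuclideanSpace ℝ (Fin d)) : Integrable (gaussKernel d τ x) μ :=
  .of_bound (continuous_gaussKernel x).aestronglyMeasurable _
    (.of_forall fun y => by
      rw [Real.norm_of_nonneg (gaussKernel_nonneg x y)]; exact gaussKernel_le x y)

theorem integral_gaussKernel_pos (hτ : τ ≠ 0) (μ : Measure (EuclideanSpace ℝ (Fin d)))
    [IsFiniteMeasure μ] [NeZero μ] (x : EuclideanSpace ℝ (Fin d)) :
    0 < ∫ y, gaussKernel d τ x y ∂μ := by
  rw [integral_pos_iff_support_of_nonneg (gaussKernel_nonneg x) (integrable_gaussKernel μ x),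
    Function.support_eq_univ fun y => (gaussKernel_pos hτ x y).ne']
  exact Measure.measure_univ_pos.2 (NeZero.ne μ)

theorem hasGradientAt_integral_gaussKernel (hτ : 0 < τ) (μ : Measure (EuclideanSpace ℝ (Fin d)))
    [IsFiniteMeasure μ] (x : EuclideanSpace ℝ (Fin d)) :
    HasGradientAt (fun x => ∫ y, gaussKernel d τ x y ∂μ)
      ((τ ^ 2)⁻¹ • ∫ y, gaussKernel d τ x y • (y - x) ∂μ) x := by
  rw [← integral_smul]
  refine hasGradientAt_integral_of_dominated
    (fun x' => (continuous_gaussKernel x').aestronglyMeasurable) (integrable_gaussKernel μ x)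
    (by have := continuous_gaussKernel (τ := τ) x; fun_prop) (.of_forall fun y x' => ?_)
    (integrable_const ((τ ^ 2)⁻¹ * ((2 * π * τ ^ 2) ^ (-(d : ℝ) / 2) * τ)))
    (.of_forall fun y x' => hasGradientAt_gaussKernel y x')
  rw [norm_smul, Real.norm_of_nonneg (by positivity)]
  exact mul_le_mul_of_nonneg_left (norm_gaussKernel_smul_sub_le hτ x' y) (by positivity)

theorem gradient_log_integral_gaussKernel (hτ : 0 < τ) (μ : Measure (EuclideanSpace ℝ (Fin d)))
    [IsFiniteMeasure μ] [NeZero μ] (x : EuclideanSpace ℝ (Fin d)) :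
    gradient (fun x => log (∫ y, gaussKernel d τ x y ∂μ)) x
      = (τ ^ 2)⁻¹ • ((∫ y, gaussKernel d τ x y ∂μ)⁻¹ • ∫ y, gaussKernel d τ x y • (y - x) ∂μ) := by
  have h := (hasDerivAt_log (integral_gaussKernel_pos hτ.ne' μ x).ne').comp_hasGradientAt
    (f := fun x => ∫ y, gaussKernel d τ x y ∂μ) (hasGradientAt_integral_gaussKernel hτ μ x)
  rw [h.gradient, smul_comm]

end Gaussian

theorem gaussian_drifting_field_eq_general
    (d : ℕ) (τ : ℝ) (hτ : 0 < τ)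
    (p q : Measure (EuclideanSpace ℝ (Fin d)))
    [IsProbabilityMeasure p] [IsProbabilityMeasure q] :
    (∀ x,
      ((∫ y, gaussKernel d τ x y ∂p)⁻¹ • ∫ y, gaussKernel d τ x y • (y - x) ∂p)
        - ((∫ y, gaussKernel d τ x y ∂q)⁻¹ • ∫ y, gaussKernel d τ x y • (y - x) ∂q)
      = τ ^ 2 • (gradient (fun x' => Real.log (∫ y, gaussKernel d τ x' y ∂p)) x
          - gradient (fun x' => Real.log (∫ y, gaussKernel d τ x' y ∂q)) x))
    ∧ (∀ x,
      ((∫ y, gaussKernel d τ x y ∂p)⁻¹ • ∫ y, gradient (fun x' => gaussKernel d τ x' y) x ∂p)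
        - ((∫ y, gaussKernel d τ x y ∂q)⁻¹ •
            ∫ y, gradient (fun x' => gaussKernel d τ x' y) x ∂q)
      = (1 / τ ^ 2) •
          (((∫ y, gaussKernel d τ x y ∂p)⁻¹ • ∫ y, gaussKernel d τ x y • (y - x) ∂p)
            - ((∫ y, gaussKernel d τ x y ∂q)⁻¹ •
                ∫ y, gaussKernel d τ x y • (y - x) ∂q))) := by
  refine ⟨fun x => ?_, fun x => ?_⟩
  · rw [gradient_log_integral_gaussKernel hτ p x, gradient_log_integral_gaussKernel hτ q x,
      ← smul_sub, smul_smul, mul_inv_cancel₀ (by positivity), one_smul]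
  · simp_rw [fun y => (hasGradientAt_gaussKernel (τ := τ) y x).gradient, integral_smul,
      smul_comm _ (τ ^ 2)⁻¹, one_div, smul_sub]

/-- for the Gaussian kernel, the original drifting field equals
`τ²` times the difference of smoothed scores, and the kernel-gradient drift equals
`(1/τ²)` times the original drifting field. -/
theorem gaussian_drifting_field_eq
    (d : ℕ) (hd : 1 ≤ d) (τ : ℝ) (hτ : 0 < τ)
    (p q : Measure (EuclideanSpace ℝ (Fin d)))
    [IsProbabilityMeasure p] [IsProbabilityMeasure q] :
    (∀ x,
      ((∫ y, gaussKernel d τ x y ∂p)⁻¹ • ∫ y, gaussKernel d τ x y • (y - x) ∂p)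
        - ((∫ y, gaussKernel d τ x y ∂q)⁻¹ • ∫ y, gaussKernel d τ x y • (y - x) ∂q)
      = τ ^ 2 • (gradient (fun x' => Real.log (∫ y, gaussKernel d τ x' y ∂p)) x
          - gradient (fun x' => Real.log (∫ y, gaussKernel d τ x' y ∂q)) x))
    ∧ (∀ x,
      ((∫ y, gaussKernel d τ x y ∂p)⁻¹ • ∫ y, gradient (fun x' => gaussKernel d τ x' y) x ∂p)
        - ((∫ y, gaussKernel d τ x y ∂q)⁻¹ •
            ∫ y, gradient (fun x' => gaussKernel d τ x' y) x ∂q)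
      = (1 / τ ^ 2) •
          (((∫ y, gaussKernel d τ x y ∂p)⁻¹ • ∫ y, gaussKernel d τ x y • (y - x) ∂p)
            - ((∫ y, gaussKernel d τ x y ∂q)⁻¹ •
                ∫ y, gaussKernel d τ x y • (y - x) ∂q))) :=
  gaussian_drifting_field_eq_general d τ hτ p q
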